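/- Verification of the Lyapunov condition for quantized scalar products: let (v_i)_{i≥1} and (x_i)_{i≥1} be real sequences with |v_i| ≤ M, |x_i| ≤ M and scaling factors α_i ≤ M for all i, let Q be the scaled stochastic uniform quantization with s+1 levels, set X_i = Q(v)_i x_i, μ_i = v_i x_i, and s_n² = Σ_{i=1}^n Var[X_i]. If s_n → ∞ as n → ∞, then (1/s_n³)·Σ_{i=1}^n E[|X_i − μ_i|³] ≤ (M²/s)·(1/s_n) for every n, and hence lim_{n→∞} (1/s_n³)·Σ_{i=1}^n E[|X_i − μ_i|³] = 0. -/

import Mathlib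

open MeasureTheory ProbabilityTheory Filter

/-- The law of a real-valued Bernoulli random variable with success probability `p`. -/
noncomputable def bernoulliLaw (p : ℝ) : Measure ℝ :=
  ENNReal.ofReal (1 - p) • Measure.dirac 0 + ENNReal.ofReal p • Measure.dirac 1

/-- The success probability `k = s·x − ⌊x·s⌋` used in stochastic uniform quantization. -/
noncomputable def quantProb (s : ℕ) (x : ℝ) : ℝ := (s : ℝ) * x - (⌊x * (s : ℝ)⌋ : ℝ)

/-- One coordinate of the stochastic uniform quantization with `s+1` levels:
`Q̂(x) = ⌊x·s⌋/s + ξ/s`, where `ξ` is the Bernoulli noise. -/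
noncomputable def qhat (s : ℕ) (x ξ : ℝ) : ℝ := (⌊x * (s : ℝ)⌋ : ℝ) / s + ξ / s

/-!
Write `y = (v - β)/α` and `p = s·y − ⌊y·s⌋`. Then `Q(v) = v + (α/s)(ξ − p)` with `ξ` Bernoulli(`p`),
so `X − μ = c(ξ − p)` with `|c| = |α x|/s ≤ M²/s`. For a centred Bernoulli variable
`E|ξ − p|³ = p(1 − p)(p² + (1 − p)²) ≤ p(1 − p) = Var ξ`, hence `E|X − μ|³ ≤ |c| Var X ≤ (M²/s) Var X`.
Summing gives `Σ E|X_i − μ_i|³ ≤ (M²/s) s_n²`, and dividing by `s_n³` gives the bound, which tends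
to `0` as `s_n → ∞`.
-/

lemma quantProb_eq_fract (s : ℕ) (y : ℝ) : quantProb s y = Int.fract (y * s) := by
  rw [quantProb, Int.fract, mul_comm]

lemma quantProb_nonneg (s : ℕ) (y : ℝ) : 0 ≤ quantProb s y :=
  quantProb_eq_fract s y ▸ Int.fract_nonneg _

lemma quantProb_le_one (s : ℕ) (y : ℝ) : quantProb s y ≤ 1 :=
  quantProb_eq_fract s y ▸ (Int.fract_lt_one _).le

lemma scaled_qhat_eq {s : ℕ} (hs : (s : ℝ) ≠ 0) {α : ℝ} (hα : α ≠ 0) (w β t : ℝ) :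
    α * qhat s ((w - β) / α) t + β = w + α / s * (t - quantProb s ((w - β) / α)) := by
  rw [qhat, quantProb]
  field_simp
  ring

lemma integral_bernoulliLaw {p : ℝ} (hp0 : 0 ≤ p) (hp1 : p ≤ 1) (f : ℝ → ℝ) :
    ∫ t, f t ∂bernoulliLaw p = (1 - p) * f 0 + p * f 1 := by
  have hdirac : ∀ (c : ENNReal) (a : ℝ), c ≠ ⊤ → Integrable f (c • Measure.dirac a) :=
    fun c a hc => ((integrable_const (f a)).congr (ae_eq_dirac f).symm).smul_measure hc
  rw [bernoulliLaw, integral_add_measure (hdirac _ _ ENNReal.ofReal_ne_top)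
      (hdirac _ _ ENNReal.ofReal_ne_top),
    integral_smul_measure, integral_smul_measure, integral_dirac, integral_dirac,
    ENNReal.toReal_ofReal (by linarith), ENNReal.toReal_ofReal hp0, smul_eq_mul, smul_eq_mul]

section BernoulliNoise

variable {Ω : Type*} [MeasurableSpace Ω] {μ : Measure Ω} {ξ : Ω → ℝ} {p : ℝ}

lemma integral_comp_of_map_eq_bernoulliLaw (hξ : Measurable ξ)
    (hlaw : μ.map ξ = bernoulliLaw p) (hp0 : 0 ≤ p) (hp1 : p ≤ 1) {f : ℝ → ℝ}
    (hf : Measurable f) : ∫ ω, f (ξ ω) ∂μ = (1 - p) * f 0 + p * f 1 := by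
  rw [← integral_map hξ.aemeasurable hf.aestronglyMeasurable, hlaw,
    integral_bernoulliLaw hp0 hp1]

lemma integral_abs_sub_pow_three_le_abs_mul_variance (hξ : Measurable ξ)
    (hlaw : μ.map ξ = bernoulliLaw p) (hp0 : 0 ≤ p) (hp1 : p ≤ 1) {Y : Ω → ℝ} {b c : ℝ}
    (hY : ∀ ω, Y ω = b + c * (ξ ω - p)) :
    ∫ ω, |Y ω - b| ^ 3 ∂μ ≤ |c| * variance Y μ := by
  have hY' : Y = fun ω => b + c * (ξ ω - p) := funext hY
  have hE {f : ℝ → ℝ} (hf : Measurable f) :=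
    integral_comp_of_map_eq_bernoulliLaw hξ hlaw hp0 hp1 hf
  have hmean : ∫ ω, Y ω ∂μ = b := by
    rw [hY', hE (f := fun t => b + c * (t - p)) (by fun_prop)]
    ring
  have hvar : variance Y μ = c ^ 2 * (p * (1 - p)) := by
    rw [variance_eq_integral (by rw [hY']; fun_prop), hmean, hY',
      hE (f := fun t => (b + c * (t - p) - b) ^ 2) (by fun_prop)]
    ring
  have hmoment : ∫ ω, |Y ω - b| ^ 3 ∂μ = |c| ^ 3 * (p * (1 - p) * (p ^ 2 + (1 - p) ^ 2)) := by
    rw [hY', hE (f := fun t => |b + c * (t - p) - b| ^ 3) (by fun_prop)]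
    simp only [add_sub_cancel_left, abs_mul, abs_neg, zero_sub, abs_of_nonneg hp0,
      abs_of_nonneg (sub_nonneg.2 hp1)]
    ring
  have hsq : p ^ 2 + (1 - p) ^ 2 ≤ 1 := by nlinarith
  calc ∫ ω, |Y ω - b| ^ 3 ∂μ = |c| ^ 3 * (p * (1 - p) * (p ^ 2 + (1 - p) ^ 2)) := hmoment
    _ ≤ |c| ^ 3 * (p * (1 - p) * 1) := by
      gcongr
    _ = |c| * variance Y μ := by rw [hvar, ← sq_abs c]; ring

end BernoulliNoise

lemma one_div_pow_three_mul_le {t S K : ℝ} (ht : 0 ≤ t) (hS : S ≤ K * t ^ 2) :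
    1 / t ^ 3 * S ≤ K * (1 / t) := by
  rcases ht.eq_or_lt with rfl | ht
  · simp
  · calc 1 / t ^ 3 * S ≤ 1 / t ^ 3 * (K * t ^ 2) := by gcongr
      _ = K * (1 / t) := by field_simp

theorem quantized_scalar_product_lyapunov_condition_general
    {Ω : Type*} [MeasurableSpace Ω] (μ : Measure Ω) [IsProbabilityMeasure μ]
    (s : ℕ) (hs : 1 ≤ s) (M : ℝ)
    (v x α β : ℕ → ℝ)
    (hα : ∀ i, 0 < α i)
    (hx : ∀ i, |x i| ≤ M) (hαM : ∀ i, α i ≤ M)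
    (ξ : ℕ → Ω → ℝ) (hmeas : ∀ i, Measurable (ξ i))
    (hlaw : ∀ i, μ.map (ξ i) = bernoulliLaw (quantProb s ((v i - β i) / α i)))
    (X : ℕ → Ω → ℝ)
    (hX : ∀ i ω, X i ω = (α i * qhat s ((v i - β i) / α i) (ξ i ω) + β i) * x i)
    (sn : ℕ → ℝ)
    (hsn : ∀ n, sn n = Real.sqrt (∑ i ∈ Finset.range n, variance (X i) μ))
    (htend : Tendsto sn atTop atTop) :
    (∀ n, (1 / (sn n) ^ 3) * ∑ i ∈ Finset.range n, ∫ ω, |X i ω - v i * x i| ^ 3 ∂μ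
        ≤ (M ^ 2 / s) * (1 / sn n)) ∧
    Tendsto
      (fun n => (1 / (sn n) ^ 3) * ∑ i ∈ Finset.range n, ∫ ω, |X i ω - v i * x i| ^ 3 ∂μ)
      atTop (nhds 0) := by
  have hs0 : (s : ℝ) ≠ 0 := Nat.cast_ne_zero.2 (by omega)
  have hM : 0 ≤ M := (hα 0).le.trans (hαM 0)
  have hmoment (i : ℕ) :
      ∫ ω, |X i ω - v i * x i| ^ 3 ∂μ ≤ M ^ 2 / s * variance (X i) μ := by
    have hXi : ∀ ω, X i ω = v i * x i + α i * x i / s *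
        (ξ i ω - quantProb s ((v i - β i) / α i)) := fun ω => by
      rw [hX, scaled_qhat_eq hs0 (hα i).ne']
      ring
    refine (integral_abs_sub_pow_three_le_abs_mul_variance (hmeas i) (hlaw i)
      (quantProb_nonneg _ _) (quantProb_le_one _ _) hXi).trans ?_
    gcongr
    · exact variance_nonneg _ _
    rw [abs_div, abs_mul, Nat.abs_cast, abs_of_pos (hα i), sq]
    gcongr
    · exact hαM i
    · exact hx i
  have hbound (n : ℕ) := one_div_pow_three_mul_le (S := ∑ i ∈ Finset.range n,
      ∫ ω, |X i ω - v i * x i| ^ 3 ∂μ) (hsn n ▸ Real.sqrt_nonneg _) <| by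
    rw [hsn n, Real.sq_sqrt (Finset.sum_nonneg fun i _ => variance_nonneg _ _), Finset.mul_sum]
    exact Finset.sum_le_sum fun i _ => hmoment i
  refine ⟨hbound, squeeze_zero (fun n => ?_) hbound ?_⟩
  · exact mul_nonneg (one_div_nonneg.2 (pow_nonneg (hsn n ▸ Real.sqrt_nonneg _) 3))
      (Finset.sum_nonneg fun i _ => integral_nonneg fun ω => by positivity)
  · simpa [one_div] using htend.inv_tendsto_atTop.const_mul (M ^ 2 / s)

/-- Verification of the Lyapunov condition for quantized scalar products: with
`X_i = Q(v)_i·x_i`, `μ_i = v_i·x_i`, `s_n² = Σ_{i<n} Var[X_i]`, and all quantities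
bounded by `M`, if `s_n → ∞` then
`(1/s_n³)·Σ_{i<n} E[|X_i − μ_i|³] ≤ (M²/s)·(1/s_n)` for every `n`, and the
left-hand side tends to `0`. -/
theorem quantized_scalar_product_lyapunov_condition
    {Ω : Type*} [MeasurableSpace Ω] (μ : Measure Ω) [IsProbabilityMeasure μ]
    (s : ℕ) (hs : 1 ≤ s) (M : ℝ)
    (v x α β : ℕ → ℝ)
    (hα : ∀ i, 0 < α i) (hscaled : ∀ i, (v i - β i) / α i ∈ Set.Icc (0 : ℝ) 1)
    (hv : ∀ i, |v i| ≤ M) (hx : ∀ i, |x i| ≤ M) (hαM : ∀ i, α i ≤ M)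
    (ξ : ℕ → Ω → ℝ) (hmeas : ∀ i, Measurable (ξ i))
    (hind : iIndepFun ξ μ)
    (hlaw : ∀ i, μ.map (ξ i) = bernoulliLaw (quantProb s ((v i - β i) / α i)))
    (X : ℕ → Ω → ℝ)
    (hX : ∀ i ω, X i ω = (α i * qhat s ((v i - β i) / α i) (ξ i ω) + β i) * x i)
    (sn : ℕ → ℝ)
    (hsn : ∀ n, sn n = Real.sqrt (∑ i ∈ Finset.range n, variance (X i) μ))
    (htend : Tendsto sn atTop atTop) :
    (∀ n, (1 / (sn n) ^ 3) * ∑ i ∈ Finset.range n, ∫ ω, |X i ω - v i * x i| ^ 3 ∂μ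
        ≤ (M ^ 2 / s) * (1 / sn n)) ∧
    Tendsto
      (fun n => (1 / (sn n) ^ 3) * ∑ i ∈ Finset.range n, ∫ ω, |X i ω - v i * x i| ^ 3 ∂μ)
      atTop (nhds 0) :=
  quantized_scalar_product_lyapunov_condition_general μ s hs M v x α β hα hx hαM ξ hmeas hlaw X hX
    sn hsn htend
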